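/- arXiv:2308.05871 — 3 statements merged into one kernel-verified Lean document; each statement's English description precedes it below -/
import Mathlib

section
/- The quantum Fisher information for the J_y-rotation family on the state ρ = ½ P_{m} + ½ P_{m-1} (equal mixture of two adjacent Dicke states in the spin-(N-1)/2 representation with m = N/2, arising from one-particle loss from the twin Fock state) equals (N/2)^2 - 1. -/
open Matrix Complex Finset

noncomputable def Jplus (N : ℕ) : Matrix (Fin (N + 1)) (Fin (N + 1)) ℂ :=
  fun i k => if (i : ℕ) = (k : ℕ) + 1 then
      (Real.sqrt ((N / 2 : ℝ) * (N / 2 + 1) - ((k : ℝ) - N / 2) * ((k : ℝ) - N / 2 + 1)) : ℂ)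
    else 0

noncomputable def Jminus (N : ℕ) : Matrix (Fin (N + 1)) (Fin (N + 1)) ℂ := (Jplus N)ᴴ

noncomputable def Jy (N : ℕ) : Matrix (Fin (N + 1)) (Fin (N + 1)) ℂ :=
  (2 * Complex.I)⁻¹ • (Jplus N - Jminus N)

lemma normSq_aux (x : ℝ) (hx : 0 ≤ x) :
    Complex.normSq ((2 * Complex.I)⁻¹ * ((Real.sqrt x : ℝ) : ℂ)) = x / 4 := by
  simp [Complex.normSq_mul, Complex.normSq_inv, Complex.normSq_I, Complex.normSq_ofReal,
    Real.mul_self_sqrt hx]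
  ring

lemma Jy_up (M k : ℕ) (h : k + 1 < M + 1) (h' : k < M + 1) :
    Jy M ⟨k+1, h⟩ ⟨k, h'⟩ = (2*Complex.I)⁻¹ *
      ((Real.sqrt (((M:ℝ)/2) * ((M:ℝ)/2+1) - ((k:ℝ) - (M:ℝ)/2) * ((k:ℝ) - (M:ℝ)/2+1)) : ℝ) : ℂ) := by
  simp only [Jy, Jminus, Jplus, Matrix.smul_apply, Matrix.sub_apply, Matrix.conjTranspose_apply,
    Fin.val_mk, if_pos rfl, if_neg (by omega : ¬ (k = k + 1 + 1)), map_zero, sub_zero, smul_eq_mul]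
  simp

lemma Jy_down (M k : ℕ) (h : k + 1 < M + 1) (h' : k < M + 1) :
    Jy M ⟨k, h'⟩ ⟨k+1, h⟩ = -((2*Complex.I)⁻¹ *
      ((Real.sqrt (((M:ℝ)/2) * ((M:ℝ)/2+1) - ((k:ℝ) - (M:ℝ)/2) * ((k:ℝ) - (M:ℝ)/2+1)) : ℝ) : ℂ)) := by
  simp only [Jy, Jminus, Jplus, Matrix.smul_apply, Matrix.sub_apply, Matrix.conjTranspose_apply,
    Fin.val_mk, if_pos rfl, if_neg (by omega : ¬ (k = k + 1 + 1)), map_zero, zero_sub, smul_eq_mul,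
    Complex.conj_ofReal]
  simp

lemma Jy_zero (M : ℕ) (a b : Fin (M+1)) (h1 : ¬ ((a:ℕ) = (b:ℕ)+1)) (h2 : ¬ ((b:ℕ) = (a:ℕ)+1)) :
    Jy M a b = 0 := by
  simp [Jy, Jminus, Jplus, Matrix.smul_apply, Matrix.sub_apply, Matrix.conjTranspose_apply, h1, h2]


/-- The QFI, computed by the spectral formula (terms with vanishing `λ_a + λ_b` omitted),
for the `J_y`-rotation family on `ρ = ½|j,1/2⟩⟨j,1/2| + ½|j,-1/2⟩⟨j,-1/2|` in the
spin-`j = (N-1)/2` representation (the state after one-particle loss from the `N`-particle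
twin Fock state, `N` even): `F = (N/2)² - 1`. Here the basis index `k : Fin ((N-1)+1)`
corresponds to `J_z` eigenvalue `μ = k - (N-1)/2`, so `μ = ±1/2` are `k = N/2, N/2 - 1`. -/
theorem qfi_one_loss (N : ℕ) (hN : Even N) (h2 : 2 ≤ N)
    (lam : Fin (N - 1 + 1) → ℝ)
    (hlam : lam = fun (k : Fin (N - 1 + 1)) => if (k : ℕ) = N / 2 ∨ (k : ℕ) = N / 2 - 1 then (1 / 2 : ℝ) else 0) :
    (2 * ∑ a : Fin (N - 1 + 1), ∑ b : Fin (N - 1 + 1),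
        if lam a + lam b = 0 then 0
        else (lam a - lam b) ^ 2 / (lam a + lam b) * Complex.normSq (Jy (N - 1) a b)) =
      ((N : ℝ) / 2) ^ 2 - 1 := by
  obtain ⟨n, rfl⟩ := hN
  have hn1 : 1 ≤ n := by omega
  have hlam' : ∀ k : Fin (n + n - 1 + 1), lam k = if (k:ℕ) = n ∨ (k:ℕ) = n - 1 then (1/2:ℝ) else 0 := by
    intro k
    have hdiv : (n+n)/2 = n := by omega
    rw [hlam]
    simp [hdiv]
  clear hlam
  rcases eq_or_lt_of_le hn1 with h1 | hn2
  · -- n = 1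
    obtain rfl := h1.symm
    have hz : ∀ a b : Fin (1 + 1 - 1 + 1),
        (if lam a + lam b = 0 then (0:ℝ)
         else (lam a - lam b) ^ 2 / (lam a + lam b) * Complex.normSq (Jy (1 + 1 - 1) a b)) = 0 := by
      intro a b
      have ha : lam a = 1/2 := by
        rw [hlam' a, if_pos (by have := a.isLt; omega)]
      have hb : lam b = 1/2 := by
        rw [hlam' b, if_pos (by have := b.isLt; omega)]
      rw [ha, hb]
      norm_num
    rw [Finset.sum_eq_zero fun a _ => Finset.sum_eq_zero fun b _ => hz a b]
    norm_num
  · -- 2 ≤ n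
    have hn2' : 2 ≤ n := hn2
    set T : Finset (Fin (n + n - 1 + 1) × Fin (n + n - 1 + 1)) :=
      {(⟨n+1, by omega⟩, ⟨n, by omega⟩), (⟨n, by omega⟩, ⟨n+1, by omega⟩),
       (⟨n-2, by omega⟩, ⟨n-1, by omega⟩), (⟨n-1, by omega⟩, ⟨n-2, by omega⟩)} with hT
    rw [← Finset.sum_product', Finset.univ_product_univ]
    have hzero : ∀ x ∈ (Finset.univ : Finset (Fin (n+n-1+1) × Fin (n+n-1+1))),
        x ∉ T →
        (if lam x.1 + lam x.2 = 0 then (0:ℝ)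
         else (lam x.1 - lam x.2) ^ 2 / (lam x.1 + lam x.2) * Complex.normSq (Jy (n + n - 1) x.1 x.2)) = 0 := by
      rintro ⟨a, b⟩ - hx
      simp only [hT, Finset.mem_insert, Finset.mem_singleton, Prod.mk.injEq, Fin.mk.injEq,
        not_or, not_and, Prod.ext_iff, Fin.ext_iff] at hx
      obtain ⟨hx1, hx2, hx3, hx4⟩ := hx
      by_cases hA : (a:ℕ) = n ∨ (a:ℕ) = n - 1 <;> by_cases hB : (b:ℕ) = n ∨ (b:ℕ) = n - 1
      · rw [hlam' a, hlam' b, if_pos hA, if_pos hB]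
        norm_num
      · have hJ : Jy (n + n - 1) a b = 0 := by
          refine Jy_zero _ _ _ ?_ ?_ <;> omega
        rw [hJ]
        simp
      · have hJ : Jy (n + n - 1) a b = 0 := by
          refine Jy_zero _ _ _ ?_ ?_ <;> omega
        rw [hJ]
        simp
      · rw [hlam' a, hlam' b, if_neg hA, if_neg hB]
        norm_num
    rw [← Finset.sum_subset (Finset.subset_univ T) hzero]
    -- evaluate the four terms
    have harg1 : ((↑(n+n-1):ℝ)/2) * ((↑(n+n-1):ℝ)/2+1) - ((↑n:ℝ) - (↑(n+n-1):ℝ)/2) * ((↑n:ℝ) - (↑(n+n-1):ℝ)/2+1)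
        = (n:ℝ)^2 - 1 := by
      have : ((n+n-1:ℕ):ℝ) = (n:ℝ) + (n:ℝ) - 1 := by
        push_cast [Nat.cast_sub (by omega : 1 ≤ n + n)]
        ring
      rw [this]; ring
    have harg2 : ((↑(n+n-1):ℝ)/2) * ((↑(n+n-1):ℝ)/2+1) - ((↑(n-2):ℝ) - (↑(n+n-1):ℝ)/2) * ((↑(n-2):ℝ) - (↑(n+n-1):ℝ)/2+1)
        = (n:ℝ)^2 - 1 := by
      have e1 : ((n+n-1:ℕ):ℝ) = (n:ℝ) + (n:ℝ) - 1 := by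
        push_cast [Nat.cast_sub (by omega : 1 ≤ n + n)]
        ring
      have e2 : ((n-2:ℕ):ℝ) = (n:ℝ) - 2 := by
        push_cast [Nat.cast_sub hn2']
        ring
      rw [e1, e2]; ring
    have hpos : (0:ℝ) ≤ (n:ℝ)^2 - 1 := by
      have : (1:ℝ) ≤ (n:ℝ) := by exact_mod_cast hn1
      nlinarith
    have hu1 : Jy (n + n - 1) ⟨n+1, by omega⟩ ⟨n, by omega⟩
        = (2*Complex.I)⁻¹ * ((Real.sqrt ((n:ℝ)^2 - 1) : ℝ) : ℂ) := by
      rw [Jy_up (n+n-1) n (by omega) (by omega), harg1]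
    have hd1 : Jy (n + n - 1) ⟨n, by omega⟩ ⟨n+1, by omega⟩
        = -((2*Complex.I)⁻¹ * ((Real.sqrt ((n:ℝ)^2 - 1) : ℝ) : ℂ)) := by
      rw [Jy_down (n+n-1) n (by omega) (by omega), harg1]
    have hu2 : Jy (n + n - 1) ⟨n-1, by omega⟩ ⟨n-2, by omega⟩
        = (2*Complex.I)⁻¹ * ((Real.sqrt ((n:ℝ)^2 - 1) : ℝ) : ℂ) := by
      have : Jy (n + n - 1) ⟨n-2+1, by omega⟩ ⟨n-2, by omega⟩
          = (2*Complex.I)⁻¹ * ((Real.sqrt ((n:ℝ)^2 - 1) : ℝ) : ℂ) := by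
        rw [Jy_up (n+n-1) (n-2) (by omega) (by omega), harg2]
      convert this using 3
      omega
    have hd2 : Jy (n + n - 1) ⟨n-2, by omega⟩ ⟨n-1, by omega⟩
        = -((2*Complex.I)⁻¹ * ((Real.sqrt ((n:ℝ)^2 - 1) : ℝ) : ℂ)) := by
      have : Jy (n + n - 1) ⟨n-2, by omega⟩ ⟨n-2+1, by omega⟩
          = -((2*Complex.I)⁻¹ * ((Real.sqrt ((n:ℝ)^2 - 1) : ℝ) : ℂ)) := by
        rw [Jy_down (n+n-1) (n-2) (by omega) (by omega), harg2]
      convert this using 3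
      omega
    have hns : Complex.normSq ((2*Complex.I)⁻¹ * ((Real.sqrt ((n:ℝ)^2 - 1) : ℝ) : ℂ)) = ((n:ℝ)^2-1)/4 :=
      normSq_aux _ hpos
    have hl0 : lam ⟨n, by omega⟩ = 1/2 := by rw [hlam']; simp
    have hl1 : lam ⟨n+1, by omega⟩ = 0 := by
      rw [hlam', if_neg (by simp; omega)]
    have hlm1 : lam ⟨n-1, by omega⟩ = 1/2 := by
      rw [hlam', if_pos (by simp)]
    have hlm2 : lam ⟨n-2, by omega⟩ = 0 := by
      rw [hlam', if_neg (by simp; omega)]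
    rw [hT]
    rw [Finset.sum_insert (by simp [Prod.ext_iff, Fin.ext_iff]; omega),
        Finset.sum_insert (by simp [Prod.ext_iff, Fin.ext_iff]; omega),
        Finset.sum_insert (by simp [Prod.ext_iff, Fin.ext_iff]; omega),
        Finset.sum_singleton]
    simp only [hl0, hl1, hlm1, hlm2, hu1, hd1, hu2, hd2, map_neg, Complex.normSq_neg, hns]
    have hcast : ((↑(n+n):ℝ)) = (n:ℝ) + (n:ℝ) := by push_cast; ring
    rw [hcast]
    norm_num
    ring
end

section
/- For any parameterized density matrix ρ_θ and vector of observables O = (O_1,…,O_K) with invertible covariance matrix, the generalized signal-to-noise ratio (dm/dθ)ᵀ C^{-1} (dm/dθ) is bounded above by the quantum Fisher information, where m(θ) = (⟨O_1⟩_{ρ_θ},…,⟨O_K⟩_{ρ_θ}) and C_{ij} = ½⟨{O_i - ⟨O_i⟩, O_j - ⟨O_j⟩}⟩_{ρ_θ}. -/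
open Matrix Complex Finset
open scoped ComplexOrder
open LinearMap (BilinForm)

/-! `⟨A, B⟩ = Re Tr(ρ A Bᴴ)` is a symmetric positive semidefinite real bilinear form. On
Hermitian matrices it gives the symmetrized correlations, and by the SLD equation
`m'_i = ⟨O_i, L⟩`. As `Tr ρ' = 0` we have `⟨1, L⟩ = 0`, so centering `δO_i = O_i - ⟨O_i, 1⟩`
leaves `m'` unchanged and turns the Gram matrix of the `δO_i` into `C`. The bound is then
Bessel's inequality: with `X = Σ (C⁻¹ m')_i δO_i` (the projection of `L` onto the span of the
`δO_i`), `0 ≤ ⟨L - X, L - X⟩ = F - m'ᵀ C⁻¹ m'`. -/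

namespace LinearMap
namespace BilinForm

def gramMatrix {R M ι : Type*} [CommSemiring R] [AddCommMonoid M] [Module R M]
    (B : BilinForm R M) (v : ι → M) : Matrix ι ι R :=
  Matrix.of fun i j => B (v i) (v j)

variable {V ι : Type*} [AddCommGroup V] [Module ℝ V] [Fintype ι] [DecidableEq ι]
  {B : BilinForm ℝ V}

theorem IsSymm.apply_sub_smul_sub_smul (hB : B.IsSymm) {e : V} (he : B e e = 1) (x y : V) :
    B (x - B x e • e) (y - B y e • e) = B x y - B x e * B y e := by
  simp only [sub_left, sub_right, smul_left, smul_right, he, hB.eq e]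
  ring

theorem IsSymm.dotProduct_inv_gram_mulVec_le (hB : B.IsSymm) (hpos : ∀ x, 0 ≤ B x x)
    (v : ι → V) (u : V) :
    (fun i => B (v i) u) ⬝ᵥ ((B.gramMatrix v)⁻¹ *ᵥ fun i => B (v i) u) ≤ B u u := by
  set G := B.gramMatrix v
  set b := fun i => B (v i) u
  by_cases hG : IsUnit G.det
  swap
  · simpa [nonsing_inv_apply_not_isUnit G hG] using hpos u
  set w := G⁻¹ *ᵥ b
  have hGw : G *ᵥ w = b := by rw [mulVec_mulVec, mul_nonsing_inv G hG, one_mulVec]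
  have hxu : B (∑ i, w i • v i) u = w ⬝ᵥ b := by
    simp [dotProduct, b]
  have hxx : B (∑ i, w i • v i) (∑ i, w i • v i) = w ⬝ᵥ b := by
    rw [← hGw]
    simp only [sum_left, sum_right, smul_left, smul_right, dotProduct, mulVec, G, gramMatrix,
      of_apply, mul_sum]
    rw [Finset.sum_comm]
    exact Finset.sum_congr rfl fun i _ => Finset.sum_congr rfl fun j _ => by ring
  have hproj := hpos (u - ∑ i, w i • v i)
  rw [sub_left, sub_right, sub_right, hB.eq u (∑ i, w i • v i), hxu, hxx] at hproj
  rw [dotProduct_comm]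
  linarith

end BilinForm
end LinearMap

namespace Matrix

variable {n : Type*} [Fintype n]

-- The adjoint on the second argument makes the form symmetric and positive on all matrices.
noncomputable def reTraceForm (ρ : Matrix n n ℂ) : BilinForm ℝ (Matrix n n ℂ) :=
  LinearMap.mk₂ ℝ (fun A B => (ρ * A * Bᴴ).trace.re)
    (fun A A' B => by simp [mul_add, add_mul, trace_add])
    (fun c A B => by simp [trace_smul])
    (fun A B B' => by simp [mul_add, trace_add])
    (fun c A B => by simp [trace_smul])

variable {ρ : Matrix n n ℂ}

theorem reTraceForm_apply (A B : Matrix n n ℂ) :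
    reTraceForm ρ A B = (ρ * A * Bᴴ).trace.re := rfl

theorem IsHermitian.isSymm_reTraceForm (hρ : ρ.IsHermitian) : (reTraceForm ρ).IsSymm := by
  refine ⟨fun A B => ?_⟩
  have h : (ρ * B * Aᴴ).trace = star (ρ * A * Bᴴ).trace := by
    rw [← trace_conjTranspose, conjTranspose_mul, conjTranspose_mul, conjTranspose_conjTranspose,
      hρ.eq, ← Matrix.mul_assoc]
    exact (trace_mul_cycle _ _ _).symm
  rw [reTraceForm_apply, reTraceForm_apply, h, star_def, conj_re]

theorem PosSemidef.reTraceForm_self_nonneg (hρ : ρ.PosSemidef) (A : Matrix n n ℂ) :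
    0 ≤ reTraceForm ρ A A := by
  rw [reTraceForm_apply, trace_mul_cycle]
  exact (nonneg_iff.mp (hρ.conjTranspose_mul_mul_same A).trace_nonneg).1

theorem IsHermitian.re_trace_mul_anticommutator (hρ : ρ.IsHermitian) {A B : Matrix n n ℂ}
    (hA : A.IsHermitian) (hB : B.IsHermitian) :
    (ρ * ((1 / 2 : ℂ) • (A * B + B * A))).trace.re = reTraceForm ρ A B := by
  have hAB : (ρ * (A * B)).trace.re = reTraceForm ρ A B := by
    rw [reTraceForm_apply, hB.eq, Matrix.mul_assoc]
  have hBA : (ρ * (B * A)).trace.re = reTraceForm ρ A B := by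
    rw [hρ.isSymm_reTraceForm.eq, reTraceForm_apply, hA.eq, Matrix.mul_assoc]
  have half : (1 / 2 : ℂ) = ((1 / 2 : ℝ) : ℂ) := by norm_num
  rw [Matrix.mul_smul, trace_smul, mul_add, trace_add, smul_eq_mul, half, re_ofReal_mul, add_re,
    hAB, hBA]
  ring

theorem IsHermitian.re_trace_anticommutator_mul (hρ : ρ.IsHermitian) {L A : Matrix n n ℂ}
    (hL : L.IsHermitian) (hA : A.IsHermitian) :
    ((1 / 2 : ℂ) • (L * ρ + ρ * L) * A).trace.re = reTraceForm ρ A L := by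
  rw [← hρ.re_trace_mul_anticommutator hA hL, Matrix.smul_mul, Matrix.mul_smul, add_mul,
    mul_add, trace_smul, trace_smul, trace_add, trace_add, trace_mul_cycle L, trace_mul_cycle A,
    Matrix.mul_assoc ρ A, Matrix.mul_assoc ρ L]

theorem hasDerivAt_re_trace_mul {ρ : ℝ → Matrix n n ℂ} {ρ' : Matrix n n ℂ} {θ : ℝ}
    (hρ' : ∀ i j, HasDerivAt (fun t => ρ t i j) (ρ' i j) θ) (A : Matrix n n ℂ) :
    HasDerivAt (fun t => (ρ t * A).trace.re) (ρ' * A).trace.re θ := by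
  have h : HasDerivAt (fun t => (ρ t * A).trace) (ρ' * A).trace θ := by
    simp only [trace, diag, mul_apply]
    exact .fun_sum fun i _ => .fun_sum fun j _ => (hρ' i j).mul_const (A j i)
  exact reCLM.hasFDerivAt.comp_hasDerivAt θ h

theorem re_trace_deriv_eq_zero [DecidableEq n] {ρ : ℝ → Matrix n n ℂ} {ρ' : Matrix n n ℂ}
    {θ : ℝ} (hρ' : ∀ i j, HasDerivAt (fun t => ρ t i j) (ρ' i j) θ) (hρtr : ∀ t, (ρ t).trace = 1) :
    ρ'.trace.re = 0 := by
  have h := hasDerivAt_re_trace_mul hρ' 1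
  simp only [Matrix.mul_one, hρtr, one_re] at h
  exact h.unique (hasDerivAt_const θ _)

end Matrix

theorem snr_le_qfi_general (n K : ℕ) (ρ : ℝ → Matrix (Fin n) (Fin n) ℂ) (θ : ℝ)
    (hρpos : ∀ t, (ρ t).PosSemidef)
    (hρtr : ∀ t, (ρ t).trace = 1)
    (ρ' : Matrix (Fin n) (Fin n) ℂ)
    (hρ' : ∀ i j, HasDerivAt (fun t => ρ t i j) (ρ' i j) θ)
    (L : Matrix (Fin n) (Fin n) ℂ) (hL : L.IsHermitian)
    (hSLD : ρ' = (1 / 2 : ℂ) • (L * ρ θ + ρ θ * L))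
    (O : Fin K → Matrix (Fin n) (Fin n) ℂ) (hO : ∀ i, (O i).IsHermitian)
    (m' : Fin K → ℝ)
    (hm' : ∀ i, HasDerivAt (fun t => ((ρ t * O i).trace).re) (m' i) θ)
    (C : Matrix (Fin K) (Fin K) ℝ)
    (hC : ∀ i j, C i j =
      ((ρ θ * ((1 / 2 : ℂ) • (O i * O j + O j * O i))).trace).re
        - ((ρ θ * O i).trace).re * ((ρ θ * O j).trace).re) :
    ∑ i, ∑ j, m' i * C⁻¹ i j * m' j ≤ ((ρ θ * (L * L)).trace).re := by
  set B := reTraceForm (ρ θ)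
  have hB : B.IsSymm := (hρpos θ).1.isSymm_reTraceForm
  have hρ'_re : ∀ A, A.IsHermitian → (ρ' * A).trace.re = B A L := fun A hA =>
    hSLD ▸ (hρpos θ).1.re_trace_anticommutator_mul hL hA
  have hB11 : B 1 1 = 1 := by simp [B, reTraceForm_apply, hρtr]
  have hBL1 : B L 1 = 0 := by
    rw [hB.eq, ← hρ'_re 1 isHermitian_one, Matrix.mul_one]
    exact re_trace_deriv_eq_zero hρ' hρtr
  set δO := fun i => O i - B (O i) 1 • 1
  have hm'B : m' = fun i => B (δO i) L := by
    ext i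
    rw [(hm' i).unique (hasDerivAt_re_trace_mul hρ' (O i)), hρ'_re _ (hO i),
      LinearMap.BilinForm.sub_left, LinearMap.BilinForm.smul_left, hB.eq 1, hBL1, mul_zero,
      sub_zero]
  have hCB : C = B.gramMatrix δO := by
    ext i j
    rw [hC, LinearMap.BilinForm.gramMatrix, of_apply, hB.apply_sub_smul_sub_smul hB11,
      (hρpos θ).1.re_trace_mul_anticommutator (hO i) (hO j)]
    simp [B, reTraceForm_apply]
  calc ∑ i, ∑ j, m' i * C⁻¹ i j * m' j = m' ⬝ᵥ (C⁻¹ *ᵥ m') := by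
        simp [dotProduct, mulVec, mul_sum, mul_assoc]
    _ ≤ B L L := by
        rw [hCB, hm'B]
        exact hB.dotProduct_inv_gram_mulVec_le (hρpos θ).reTraceForm_self_nonneg δO L
    _ = (ρ θ * (L * L)).trace.re := by rw [reTraceForm_apply, hL.eq, Matrix.mul_assoc]

/-- The generalized signal-to-noise ratio of a vector of observables `O = (O₁,…,O_K)` with
invertible (symmetrized) covariance matrix `C` is bounded above by the quantum Fisher
information `F(θ) = Tr(ρ_θ L²)`, where `L` is the symmetric logarithmic derivative:
`(dm/dθ)ᵀ C⁻¹ (dm/dθ) ≤ F(θ)` with `m_i(θ) = ⟨O_i⟩_{ρ_θ}`. -/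
theorem snr_le_qfi (n K : ℕ) (ρ : ℝ → Matrix (Fin n) (Fin n) ℂ) (θ : ℝ)
    (hρherm : ∀ t, (ρ t).IsHermitian) (hρpos : ∀ t, (ρ t).PosSemidef)
    (hρtr : ∀ t, (ρ t).trace = 1)
    (ρ' : Matrix (Fin n) (Fin n) ℂ)
    (hρ' : ∀ i j, HasDerivAt (fun t => ρ t i j) (ρ' i j) θ)
    (L : Matrix (Fin n) (Fin n) ℂ) (hL : L.IsHermitian)
    (hSLD : ρ' = (1 / 2 : ℂ) • (L * ρ θ + ρ θ * L))
    (O : Fin K → Matrix (Fin n) (Fin n) ℂ) (hO : ∀ i, (O i).IsHermitian)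
    (m' : Fin K → ℝ)
    (hm' : ∀ i, HasDerivAt (fun t => ((ρ t * O i).trace).re) (m' i) θ)
    (C : Matrix (Fin K) (Fin K) ℝ)
    (hC : ∀ i j, C i j =
      ((ρ θ * ((1 / 2 : ℂ) • (O i * O j + O j * O i))).trace).re
        - ((ρ θ * O i).trace).re * ((ρ θ * O j).trace).re)
    (hCpd : C.PosDef) :
    ∑ i, ∑ j, m' i * C⁻¹ i j * m' j ≤ ((ρ θ * (L * L)).trace).re :=
  snr_le_qfi_general n K ρ θ hρpos hρtr ρ' hρ' L hL hSLD O hO m' hm' C hC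
end

section
/- In the state e^{iθJ_y}|N/2, k⟩, the fourth moment of J_z equals the explicit polynomial expression: (k^2 cos^2θ + (sin^2θ/2)(N^2/4 - k^2 + N/2))^2 + ((2k-1)^2 sin^2θ cos^2θ /4)(N/2-k+1)(N/2+k) + ((2k+1)^2 sin^2θ cos^2θ /4)(N/2+k+1)(N/2-k) + (sin^4θ/16)(N/2-k+1)(N/2-k+2)(N/2+k)(N/2+k-1) + (sin^4θ/16)(N/2-k)(N/2-k-1)(N/2+k+1)(N/2+k+2). -/
open Matrix Complex

noncomputable def Jz (N : ℕ) : Matrix (Fin (N + 1)) (Fin (N + 1)) ℂ :=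
  Matrix.diagonal (fun k => (((k : ℝ) - N / 2 : ℝ) : ℂ))

/-!
Conjugation by `e^{iθJ_y}` rotates `J_z` into `Q = cos θ J_z + sin θ J_x`: the operators
`J_z ± i J_x` satisfy `[J_y, J_z ± i J_x] = ±(J_z ± i J_x)`, so the conjugation multiplies them by
`e^{∓iθ}`. In the Dicke basis `Q` is a symmetric tridiagonal matrix, hence `Q²` is a symmetric
pentadiagonal one and `⟨k|Q⁴|k⟩ = ‖Q²|k⟩‖²` is a sum of five squares, the components of `Q²|k⟩`
along `|k⟩, |k ± 1⟩, |k ± 2⟩`; these are the five terms of the formula.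
-/

theorem NormedSpace.exp_neg_mul_mul_exp_of_mul_eq_mul_add_smul {𝔸 : Type*} [NormedRing 𝔸]
    [NormedAlgebra ℂ 𝔸] [CompleteSpace 𝔸] {a w : 𝔸} {μ : ℂ} (h : a * w = w * a + μ • w) :
    NormedSpace.exp (-a) * w * NormedSpace.exp a = Complex.exp (-μ) • w := by
  let := NormedAlgebra.restrictScalars ℚ ℂ 𝔸
  have hsemi : SemiconjBy w (a + algebraMap ℂ 𝔸 μ) a := by
    rw [SemiconjBy, mul_add, ← Algebra.commutes, ← Algebra.smul_def, h]
  have hcomm : Commute a (algebraMap ℂ 𝔸 μ) := Algebra.commute_algebraMap_right μ a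
  have := hsemi.exp_neg_mul_mul_exp_eq_self
  rw [NormedSpace.exp_add_of_commute hcomm, ← algebraMap_exp_comm (𝕂 := ℂ), ← Algebra.commutes,
    ← Algebra.smul_def, mul_smul_comm, ← Complex.exp_eq_exp_ℂ] at this
  rwa [Complex.exp_neg, eq_inv_smul_iff₀ (Complex.exp_ne_zero μ)]

theorem Matrix.exp_neg_mul_pow_mul_exp {m 𝔸 : Type*} [Fintype m] [DecidableEq m]
    [NormedCommRing 𝔸] [NormedAlgebra ℚ 𝔸] [CompleteSpace 𝔸] (A X : Matrix m m 𝔸) (n : ℕ) :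
    NormedSpace.exp (-A) * X ^ n * NormedSpace.exp A =
      (NormedSpace.exp (-A) * X * NormedSpace.exp A) ^ n := by
  obtain ⟨u, hu⟩ := Matrix.isUnit_exp A
  rw [Matrix.exp_neg, ← hu, ← Matrix.coe_units_inv, Units.conj_pow']

/-- `|z⟩`, indexed by an integer and equal to `0` when `z ∉ [0, N]`, so that the ladder operators
act on kets without boundary cases. -/
def ket (R : Type*) [Zero R] [One R] (N : ℕ) (z : ℤ) : Fin (N + 1) → R :=
  fun i => if (i : ℤ) = z then 1 else 0

section Banded

variable {R : Type*} {N : ℕ}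

theorem ket_val [Zero R] [One R] (i : Fin (N + 1)) : ket R N (i : ℕ) = Pi.single i 1 := by
  ext j
  simp [ket, Pi.single_apply, Fin.ext_iff]

theorem ket_eq_zero [Zero R] [One R] {z : ℤ} (h : z < 0 ∨ N < z) : ket R N z = 0 := by
  ext i
  simp only [ket, Pi.zero_apply, ite_eq_right_iff]
  omega

theorem exists_fin_eq_or_lt_zero_or_lt (z : ℤ) :
    (∃ j : Fin (N + 1), ((j : ℕ) : ℤ) = z) ∨ z < 0 ∨ N < z := by
  by_cases h : 0 ≤ z ∧ z ≤ N
  · exact Or.inl ⟨⟨z.toNat, by omega⟩, by simp; omega⟩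
  · omega

variable [CommRing R]

theorem Matrix.ext_of_mulVec_ket {A B : Matrix (Fin (N + 1)) (Fin (N + 1)) R}
    (h : ∀ i : Fin (N + 1), A *ᵥ ket R N (i : ℕ) = B *ᵥ ket R N (i : ℕ)) : A = B :=
  ext_of_mulVec_single fun i => by simpa only [ket_val] using h i

theorem Matrix.apply_self_eq_mulVec_ket (A : Matrix (Fin (N + 1)) (Fin (N + 1)) R)
    (i : Fin (N + 1)) : A i i = (A *ᵥ ket R N (i : ℕ)) i := by
  simp [ket_val]

/-- `T` is the symmetric tridiagonal matrix with `T z z = d z` and `T (z + 1) z = T z (z + 1) = u z`;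
quantifying over all integers `z` also forces `u (-1) = u N = 0`. -/
def IsSymmTridiag (T : Matrix (Fin (N + 1)) (Fin (N + 1)) R) (d u : ℤ → R) : Prop :=
  ∀ z : ℤ, T *ᵥ ket R N z = d z • ket R N z + u z • ket R N (z + 1) + u (z - 1) • ket R N (z - 1)

def IsSymmPentadiag (S : Matrix (Fin (N + 1)) (Fin (N + 1)) R) (a b c : ℤ → R) : Prop :=
  ∀ z : ℤ, S *ᵥ ket R N z = a z • ket R N z + b z • ket R N (z + 1) + b (z - 1) • ket R N (z - 1)
    + c z • ket R N (z + 2) + c (z - 2) • ket R N (z - 2)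

theorem IsSymmTridiag.mul_self {T : Matrix (Fin (N + 1)) (Fin (N + 1)) R} {d u : ℤ → R}
    (hT : IsSymmTridiag T d u) :
    IsSymmPentadiag (T * T) (fun z => d z ^ 2 + u z ^ 2 + u (z - 1) ^ 2)
      (fun z => u z * (d z + d (z + 1))) (fun z => u z * u (z + 1)) := by
  intro z
  have h₂ : z - 2 + 1 = z - 1 := by ring
  simp only [← mulVec_mulVec, hT _, mulVec_add, mulVec_smul, add_sub_cancel_right, sub_add_cancel,
    add_assoc, sub_sub, one_add_one_eq_two, h₂]
  module

theorem IsSymmPentadiag.mul_self_apply_self {S : Matrix (Fin (N + 1)) (Fin (N + 1)) R}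
    {a b c : ℤ → R} (hS : IsSymmPentadiag S a b c) (k : Fin (N + 1)) :
    (S * S) k k = a k ^ 2 + b k ^ 2 + b (k - 1) ^ 2 + c k ^ 2 + c (k - 2) ^ 2 := by
  rw [Matrix.apply_self_eq_mulVec_ket (S * S), ← mulVec_mulVec, hS]
  simp only [mulVec_add, mulVec_smul, hS _]
  simp +arith [ket]
  ring

theorem IsSymmTridiag.pow_four_apply_self {T : Matrix (Fin (N + 1)) (Fin (N + 1)) R}
    {d u : ℤ → R} (hT : IsSymmTridiag T d u) (k : Fin (N + 1)) :
    (T ^ 4) k k = (d k ^ 2 + u k ^ 2 + u (k - 1) ^ 2) ^ 2 + (u k * (d k + d (k + 1))) ^ 2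
      + (u (k - 1) * (d (k - 1) + d (k - 1 + 1))) ^ 2 + (u k * u (k + 1)) ^ 2
      + (u (k - 2) * u (k - 2 + 1)) ^ 2 := by
  rw [show T ^ 4 = T * T * (T * T) by noncomm_ring, hT.mul_self.mul_self_apply_self]

end Banded

section Spin

variable {N : ℕ}

/-- `⟨j, m + 1| J₊ |j, m⟩ = √(j(j + 1) - m(m + 1))` for `j = N / 2`, `m = x - N / 2`. -/
noncomputable def raisingCoeff (N : ℕ) (x : ℝ) : ℝ :=
  Real.sqrt ((N / 2 : ℝ) * (N / 2 + 1) - (x - N / 2) * (x - N / 2 + 1))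

theorem Jplus_apply (i k : Fin (N + 1)) :
    Jplus N i k = if (i : ℕ) = k + 1 then (raisingCoeff N k : ℂ) else 0 := rfl

theorem Jminus_apply (i k : Fin (N + 1)) :
    Jminus N i k = if (k : ℕ) = i + 1 then (raisingCoeff N i : ℂ) else 0 := by
  rw [Jminus, conjTranspose_apply, Jplus_apply]
  split_ifs <;> simp

theorem raisingCoeff_sq {x : ℝ} (h₀ : -1 ≤ x) (h₁ : x ≤ N) :
    raisingCoeff N x ^ 2 = (N - x) * (x + 1) := by
  rw [raisingCoeff, Real.sq_sqrt] <;> nlinarith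

theorem raisingCoeff_neg_one : raisingCoeff N (-1) = 0 := by
  rw [raisingCoeff, Real.sqrt_eq_zero']
  linarith

theorem raisingCoeff_self : raisingCoeff N N = 0 := by
  rw [raisingCoeff, Real.sqrt_eq_zero']
  linarith

theorem raisingCoeff_mul_succ_sq {z : ℤ} (h₀ : -2 ≤ z) (h₁ : z ≤ N) :
    (raisingCoeff N z * raisingCoeff N ↑(z + 1)) ^ 2 =
      (N - z) * (z + 1) * ((N - (z + 1)) * (z + 1 + 1)) := by
  rcases eq_or_ne z (-2) with rfl | h₂
  · norm_num [raisingCoeff_neg_one]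
  rcases eq_or_ne z N with rfl | h₃
  · simp [raisingCoeff_self]
  have hz₀ : (-1 : ℝ) ≤ z := by exact_mod_cast (by omega : (-1 : ℤ) ≤ z)
  have hz₁ : (z : ℝ) + 1 ≤ N := by exact_mod_cast (by omega : z + 1 ≤ N)
  rw [mul_pow, raisingCoeff_sq hz₀ (by linarith), raisingCoeff_sq (by push_cast; linarith)
    (by push_cast; exact hz₁)]
  push_cast
  ring

theorem Jz_mulVec_ket (z : ℤ) : Jz N *ᵥ ket ℂ N z = ((z - N / 2 : ℝ) : ℂ) • ket ℂ N z := by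
  ext i
  simp only [Jz, mulVec_diagonal, ket, Pi.smul_apply, smul_eq_mul, mul_ite, mul_one, mul_zero]
  split_ifs with h
  · rw [← h]; push_cast; ring
  · rfl

theorem Jplus_mulVec_ket (z : ℤ) :
    Jplus N *ᵥ ket ℂ N z = (raisingCoeff N z : ℂ) • ket ℂ N (z + 1) := by
  rcases exists_fin_eq_or_lt_zero_or_lt (N := N) z with ⟨j, rfl⟩ | hz
  · ext i
    simp only [ket_val, mulVec_single_one, col_apply, Jplus_apply, ket, Pi.smul_apply,
      smul_eq_mul, mul_ite, mul_one, mul_zero]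
    split_ifs <;> first | rfl | omega
  · rcases eq_or_ne z (-1) with rfl | hz'
    · simp [ket_eq_zero hz, raisingCoeff_neg_one]
    · rw [ket_eq_zero hz, ket_eq_zero (by omega), mulVec_zero, smul_zero]

theorem Jminus_mulVec_ket (z : ℤ) :
    Jminus N *ᵥ ket ℂ N z = (raisingCoeff N ↑(z - 1) : ℂ) • ket ℂ N (z - 1) := by
  rcases exists_fin_eq_or_lt_zero_or_lt (N := N) z with ⟨j, rfl⟩ | hz
  · ext i
    simp only [ket_val, mulVec_single_one, col_apply, Jminus_apply, ket, Pi.smul_apply,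
      smul_eq_mul, mul_ite, mul_one, mul_zero]
    split_ifs with h h' h' <;> try omega
    · congr 2
      rw [h]; push_cast; ring
    · rfl
  · rcases eq_or_ne z (N + 1) with rfl | hz'
    · simp [ket_eq_zero hz, raisingCoeff_self]
    · rw [ket_eq_zero hz, ket_eq_zero (by omega), mulVec_zero, smul_zero]

theorem Jz_mul_Jplus : Jz N * Jplus N = Jplus N * Jz N + Jplus N := by
  refine ext_of_mulVec_ket fun i => ?_
  simp only [add_mulVec, ← mulVec_mulVec, Jz_mulVec_ket, Jplus_mulVec_ket, mulVec_smul, smul_smul,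
    ← add_smul]
  congr 1
  push_cast
  ring

theorem Jz_mul_Jminus : Jz N * Jminus N = Jminus N * Jz N - Jminus N := by
  refine ext_of_mulVec_ket fun i => ?_
  simp only [sub_mulVec, ← mulVec_mulVec, Jz_mulVec_ket, Jminus_mulVec_ket, mulVec_smul, smul_smul,
    ← sub_smul]
  congr 1
  push_cast
  ring

theorem Jplus_mul_Jminus : Jplus N * Jminus N = Jminus N * Jplus N + (2 : ℂ) • Jz N := by
  refine ext_of_mulVec_ket fun i => ?_
  have hi₀ : (0 : ℝ) ≤ (i : ℕ) := Nat.cast_nonneg _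
  have hi₁ : ((i : ℕ) : ℝ) ≤ N := by exact_mod_cast Nat.lt_succ_iff.mp i.isLt
  have key : raisingCoeff N ((i : ℕ) - 1) * raisingCoeff N ((i : ℕ) - 1) =
      raisingCoeff N (i : ℕ) * raisingCoeff N (i : ℕ) + 2 * ((i : ℕ) - N / 2) := by
    rw [← sq, ← sq, raisingCoeff_sq (by linarith) (by linarith), raisingCoeff_sq (by linarith) hi₁]
    ring
  simp only [add_mulVec, smul_mulVec, ← mulVec_mulVec, Jz_mulVec_ket, Jplus_mulVec_ket,
    Jminus_mulVec_ket, mulVec_smul, smul_smul, ← add_smul, sub_add_cancel, add_sub_cancel_right]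
  congr 1
  exact_mod_cast key

noncomputable def Jx (N : ℕ) : Matrix (Fin (N + 1)) (Fin (N + 1)) ℂ :=
  (2 : ℂ)⁻¹ • (Jplus N + Jminus N)

theorem Jy_mul_Jz : Jy N * Jz N = Jz N * Jy N + I • Jx N := by
  simp only [Jy, Jx, smul_mul_assoc, mul_smul_comm, sub_mul, mul_sub, Jz_mul_Jplus, Jz_mul_Jminus]
  match_scalars <;> field_simp <;> norm_num

theorem Jx_mul_Jy : Jx N * Jy N = Jy N * Jx N + I • Jz N := by
  simp only [Jy, Jx, smul_mul_assoc, mul_smul_comm, sub_mul, mul_sub, add_mul, mul_add,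
    Jplus_mul_Jminus]
  match_scalars <;> field_simp <;> norm_num

theorem Jy_mul_Jz_add_I_smul_Jx :
    Jy N * (Jz N + I • Jx N) = (Jz N + I • Jx N) * Jy N + (Jz N + I • Jx N) := by
  simp only [mul_add, add_mul, mul_smul_comm, smul_mul_assoc, Jy_mul_Jz, Jx_mul_Jy]
  match_scalars <;> simp

theorem Jy_mul_Jz_sub_I_smul_Jx :
    Jy N * (Jz N - I • Jx N) = (Jz N - I • Jx N) * Jy N - (Jz N - I • Jx N) := by
  simp only [mul_sub, sub_mul, mul_smul_comm, smul_mul_assoc, Jy_mul_Jz, Jx_mul_Jy]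
  match_scalars <;> simp

theorem isSymmTridiag_cos_smul_Jz_add_sin_smul_Jx (N : ℕ) (θ : ℝ) :
    IsSymmTridiag ((Real.cos θ : ℂ) • Jz N + (Real.sin θ : ℂ) • Jx N)
      (fun z => ((Real.cos θ * (z - N / 2) : ℝ) : ℂ))
      (fun z => ((Real.sin θ / 2 * raisingCoeff N z : ℝ) : ℂ)) := by
  intro z
  simp only [Jx, add_mulVec, smul_mulVec, Jz_mulVec_ket, Jplus_mulVec_ket, Jminus_mulVec_ket,
    smul_add, smul_smul]
  push_cast
  module

end Spin

open scoped Matrix.Norms.Operator in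
theorem exp_neg_mul_Jz_mul_exp (N : ℕ) (θ : ℝ) :
    NormedSpace.exp (-((I * θ) • Jy N)) * Jz N * NormedSpace.exp ((I * θ) • Jy N) =
      (Real.cos θ : ℂ) • Jz N + (Real.sin θ : ℂ) • Jx N := by
  set V := NormedSpace.exp (-((I * θ) • Jy N))
  set U := NormedSpace.exp ((I * θ) • Jy N)
  have hplus : V * (Jz N + I • Jx N) * U = Complex.exp (-(I * θ)) • (Jz N + I • Jx N) :=
    NormedSpace.exp_neg_mul_mul_exp_of_mul_eq_mul_add_smul <| by
      rw [smul_mul_assoc, mul_smul_comm, Jy_mul_Jz_add_I_smul_Jx, smul_add]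
  have hminus : V * (Jz N - I • Jx N) * U = Complex.exp (-(-(I * θ))) • (Jz N - I • Jx N) :=
    NormedSpace.exp_neg_mul_mul_exp_of_mul_eq_mul_add_smul <| by
      rw [smul_mul_assoc, mul_smul_comm, Jy_mul_Jz_sub_I_smul_Jx, smul_sub, neg_smul,
        sub_eq_add_neg]
  have hJz : Jz N = (2 : ℂ)⁻¹ • ((Jz N + I • Jx N) + (Jz N - I • Jx N)) := by module
  calc V * Jz N * U = (2 : ℂ)⁻¹ • (V * (Jz N + I • Jx N) * U + V * (Jz N - I • Jx N) * U) := by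
        conv_lhs => rw [hJz]
        simp only [mul_smul_comm, smul_mul_assoc, mul_add, add_mul]
    _ = (Real.cos θ : ℂ) • Jz N + (Real.sin θ : ℂ) • Jx N := by
        rw [hplus, hminus, neg_neg, ← mul_neg, mul_comm I, mul_comm I, Complex.exp_mul_I,
          Complex.exp_mul_I, Complex.cos_neg, Complex.sin_neg]
        match_scalars
        · ring
        · linear_combination -Complex.sin θ * I_sq

theorem rotated_Jz_fourth_moment_general (N : ℕ) (θ : ℝ) (kIdx : Fin (N + 1)) (k : ℝ)
    (hk : k = (kIdx : ℝ) - N / 2) :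
    (NormedSpace.exp (-(Complex.I * θ) • Jy N) * (Jz N * Jz N * Jz N * Jz N) *
        NormedSpace.exp ((Complex.I * θ) • Jy N)) kIdx kIdx =
      (((k ^ 2 * Real.cos θ ^ 2 +
            Real.sin θ ^ 2 / 2 * ((N : ℝ) ^ 2 / 4 - k ^ 2 + N / 2)) ^ 2
        + (2 * k - 1) ^ 2 * Real.sin θ ^ 2 * Real.cos θ ^ 2 / 4 *
            ((N : ℝ) / 2 - k + 1) * ((N : ℝ) / 2 + k)
        + (2 * k + 1) ^ 2 * Real.sin θ ^ 2 * Real.cos θ ^ 2 / 4 *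
            ((N : ℝ) / 2 + k + 1) * ((N : ℝ) / 2 - k)
        + Real.sin θ ^ 4 / 16 *
            ((N : ℝ) / 2 - k + 1) * ((N : ℝ) / 2 - k + 2) *
            ((N : ℝ) / 2 + k) * ((N : ℝ) / 2 + k - 1)
        + Real.sin θ ^ 4 / 16 *
            ((N : ℝ) / 2 - k) * ((N : ℝ) / 2 - k - 1) *
            ((N : ℝ) / 2 + k + 1) * ((N : ℝ) / 2 + k + 2) : ℝ) : ℂ) := by
  set u : ℤ → ℂ := fun z => ((Real.sin θ / 2 * raisingCoeff N z : ℝ) : ℂ)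
  have hu : ∀ z : ℤ, -1 ≤ z → z ≤ N →
      u z ^ 2 = ((Real.sin θ / 2) ^ 2 * ((N - z) * (z + 1)) : ℝ) := fun z h₀ h₁ => by
    rw [← Complex.ofReal_pow, mul_pow, raisingCoeff_sq (by exact_mod_cast h₀) (by exact_mod_cast h₁)]
  have huu : ∀ z : ℤ, -2 ≤ z → z ≤ N → (u z * u (z + 1)) ^ 2 =
      ((Real.sin θ / 2) ^ 4 * ((N - z) * (z + 1) * ((N - (z + 1)) * (z + 1 + 1))) : ℝ) :=
    fun z h₀ h₁ => by
      rw [← Complex.ofReal_mul, ← Complex.ofReal_pow, mul_mul_mul_comm, mul_pow,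
        raisingCoeff_mul_succ_sq h₀ h₁]
      push_cast
      ring
  have hk₁ : ((kIdx : ℕ) : ℤ) ≤ N := by exact_mod_cast Nat.lt_succ_iff.mp kIdx.isLt
  rw [show Jz N * Jz N * Jz N * Jz N = Jz N ^ 4 by noncomm_ring, neg_smul,
    Matrix.exp_neg_mul_pow_mul_exp, exp_neg_mul_Jz_mul_exp,
    (isSymmTridiag_cos_smul_Jz_add_sin_smul_Jx N θ).pow_four_apply_self kIdx]
  -- The products go first: at `kIdx = N` the factor `u (kIdx + 1)` lies outside the range of `hu`.
  rw [huu _ (by omega) hk₁, huu _ (by omega) (by omega), mul_pow, mul_pow, hu _ (by omega) hk₁,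
    hu _ (by omega) (by omega)]
  subst hk
  push_cast
  ring

/-- Fourth moment of `J_z` in the rotated Dicke state `e^{iθJ_y}|N/2, k⟩` (`N` even). -/
theorem rotated_Jz_fourth_moment (N : ℕ) (hN : Even N) (θ : ℝ) (kIdx : Fin (N + 1)) (k : ℝ)
    (hk : k = (kIdx : ℝ) - N / 2) :
    (NormedSpace.exp (-(Complex.I * θ) • Jy N) * (Jz N * Jz N * Jz N * Jz N) *
        NormedSpace.exp ((Complex.I * θ) • Jy N)) kIdx kIdx =
      (((k ^ 2 * Real.cos θ ^ 2 +
            Real.sin θ ^ 2 / 2 * ((N : ℝ) ^ 2 / 4 - k ^ 2 + N / 2)) ^ 2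
        + (2 * k - 1) ^ 2 * Real.sin θ ^ 2 * Real.cos θ ^ 2 / 4 *
            ((N : ℝ) / 2 - k + 1) * ((N : ℝ) / 2 + k)
        + (2 * k + 1) ^ 2 * Real.sin θ ^ 2 * Real.cos θ ^ 2 / 4 *
            ((N : ℝ) / 2 + k + 1) * ((N : ℝ) / 2 - k)
        + Real.sin θ ^ 4 / 16 *
            ((N : ℝ) / 2 - k + 1) * ((N : ℝ) / 2 - k + 2) *
            ((N : ℝ) / 2 + k) * ((N : ℝ) / 2 + k - 1)
        + Real.sin θ ^ 4 / 16 *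
            ((N : ℝ) / 2 - k) * ((N : ℝ) / 2 - k - 1) *
            ((N : ℝ) / 2 + k + 1) * ((N : ℝ) / 2 + k + 2) : ℝ) : ℂ) :=
  rotated_Jz_fourth_moment_general N θ kIdx k hk
end
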